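/- arXiv:1408.6731 — 4 statements merged into one kernel-verified Lean document; each statement's English description precedes it below -/
import Mathlib

section
/- For independent [0,1]-valued random variables X_1,...,X_n with max_i E[X_i] = x, one has E[max_i X_i] ≤ 1 - (1-x)^n. -/
/-! Pointwise, `1 - max_i X_i ≥ ∏_i (1 - X_i)` because every factor lies in `[0, 1]`. Taking
expectations and using independence, `E[max_i X_i] ≤ 1 - ∏_i (1 - E[X_i]) ≤ 1 - (1 - x)^n`. -/

open MeasureTheory ProbabilityTheory

theorem Real.prod_one_sub_le_one_sub_iSup {ι : Type*} [Fintype ι] {a : ι → ℝ}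
    (h0 : ∀ i, 0 ≤ a i) (h1 : ∀ i, a i ≤ 1) : ∏ i, (1 - a i) ≤ 1 - ⨆ i, a i := by
  classical
  cases isEmpty_or_nonempty ι with
  | inl _ => simp
  | inr _ =>
    obtain ⟨j, hj⟩ := exists_eq_ciSup_of_finite (f := a)
    calc ∏ i, (1 - a i) = (1 - a j) * ∏ i ∈ Finset.univ.erase j, (1 - a i) :=
          (Finset.mul_prod_erase _ _ (Finset.mem_univ j)).symm
      _ ≤ (1 - a j) * 1 :=
          mul_le_mul_of_nonneg_left
            (Finset.prod_le_one (fun i _ => sub_nonneg.2 (h1 i)) fun i _ => sub_le_self 1 (h0 i))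
            (sub_nonneg.2 (h1 j))
      _ = 1 - ⨆ i, a i := by rw [mul_one, hj]

section UnitInterval

variable {Ω : Type*} [MeasurableSpace Ω] {μ : Measure Ω} [IsProbabilityMeasure μ]

theorem integrable_of_mem_Icc {Y : Ω → ℝ} (hY : Measurable Y) (hrange : ∀ ω, Y ω ∈ Set.Icc 0 1) :
    Integrable Y μ :=
  .of_bound hY.aestronglyMeasurable 1 <| ae_of_all _ fun ω => by
    rw [Real.norm_of_nonneg (hrange ω).1]
    exact (hrange ω).2

theorem integral_le_one_of_mem_Icc {Y : Ω → ℝ} (hY : Measurable Y)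
    (hrange : ∀ ω, Y ω ∈ Set.Icc 0 1) : ∫ ω, Y ω ∂μ ≤ 1 :=
  (integral_mono (integrable_of_mem_Icc hY hrange) (integrable_const 1)
    fun ω => (hrange ω).2).trans_eq (by simp)

variable {ι : Type*} [Fintype ι] {X : ι → Ω → ℝ}

theorem ProbabilityTheory.iIndepFun.integral_prod_one_sub (hindep : iIndepFun X μ) (hmeas : ∀ i, Measurable (X i))
    (hrange : ∀ i ω, X i ω ∈ Set.Icc 0 1) :
    ∫ ω, ∏ i, (1 - X i ω) ∂μ = ∏ i, (1 - ∫ ω, X i ω ∂μ) := by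
  rw [hindep.integral_fun_prod_comp (f := fun _ t => 1 - t) (fun i => (hmeas i).aemeasurable)
    fun _ => by fun_prop]
  congr with i
  rw [integral_sub (integrable_const 1) (integrable_of_mem_Icc (hmeas i) (hrange i))]
  simp

theorem ProbabilityTheory.iIndepFun.integral_iSup_le_one_sub_prod (hindep : iIndepFun X μ)
    (hmeas : ∀ i, Measurable (X i)) (hrange : ∀ i ω, X i ω ∈ Set.Icc 0 1) :
    ∫ ω, ⨆ i, X i ω ∂μ ≤ 1 - ∏ i, (1 - ∫ ω, X i ω ∂μ) := by
  have hsup : Integrable (fun ω => ⨆ i, X i ω) μ :=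
    integrable_of_mem_Icc (Measurable.iSup hmeas) fun ω =>
      ⟨Real.iSup_nonneg fun i => (hrange i ω).1, Real.iSup_le (fun i => (hrange i ω).2) zero_le_one⟩
  have hpointwise : ∀ ω, ∏ i, (1 - X i ω) ≤ 1 - ⨆ i, X i ω := fun ω =>
    Real.prod_one_sub_le_one_sub_iSup (fun i => (hrange i ω).1) fun i => (hrange i ω).2
  calc ∫ ω, ⨆ i, X i ω ∂μ = 1 - ∫ ω, 1 - ⨆ i, X i ω ∂μ := by
        rw [integral_sub (integrable_const 1) hsup]
        simp
    _ ≤ 1 - ∫ ω, ∏ i, (1 - X i ω) ∂μ :=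
        sub_le_sub_left (integral_mono_of_nonneg
          (ae_of_all _ fun ω => Finset.prod_nonneg fun i _ => sub_nonneg.2 (hrange i ω).2)
          ((integrable_const 1).sub hsup) (ae_of_all _ hpointwise)) 1
    _ = 1 - ∏ i, (1 - ∫ ω, X i ω ∂μ) := by rw [hindep.integral_prod_one_sub hmeas hrange]

end UnitInterval

theorem stmt_0_general {Ω : Type*} [MeasurableSpace Ω] (μ : Measure Ω) [IsProbabilityMeasure μ]
    (n : ℕ) (X : Fin n → Ω → ℝ)
    (hmeas : ∀ i, Measurable (X i))
    (hrange : ∀ i ω, X i ω ∈ Set.Icc (0 : ℝ) 1)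
    (hindep : iIndepFun X μ)
    (x : ℝ)
    (hx : IsGreatest {e : ℝ | ∃ i, e = ∫ ω, X i ω ∂μ} x) :
    ∫ ω, (⨆ i, X i ω) ∂μ ≤ 1 - (1 - x) ^ n := by
  obtain ⟨⟨i₀, hi₀⟩, hmax⟩ := hx
  have hx1 : x ≤ 1 := hi₀ ▸ integral_le_one_of_mem_Icc (hmeas i₀) (hrange i₀)
  calc ∫ ω, (⨆ i, X i ω) ∂μ ≤ 1 - ∏ i, (1 - ∫ ω, X i ω ∂μ) :=
        hindep.integral_iSup_le_one_sub_prod hmeas hrange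
    _ ≤ 1 - (1 - x) ^ n := by
        rw [← Fin.prod_const]
        gcongr 1 - ?_
        exact Finset.prod_le_prod (fun _ _ => sub_nonneg.2 hx1)
          fun i _ => sub_le_sub_left (hmax ⟨i, rfl⟩) 1

theorem stmt_0 {Ω : Type*} [MeasurableSpace Ω] (μ : Measure Ω) [IsProbabilityMeasure μ]
    (n : ℕ) (hn : 0 < n) (X : Fin n → Ω → ℝ)
    (hmeas : ∀ i, Measurable (X i))
    (hrange : ∀ i ω, X i ω ∈ Set.Icc (0 : ℝ) 1)
    (hindep : iIndepFun X μ)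
    (x : ℝ)
    (hx : IsGreatest {e : ℝ | ∃ i, e = ∫ ω, X i ω ∂μ} x) :
    ∫ ω, (⨆ i, X i ω) ∂μ ≤ 1 - (1 - x) ^ n :=
  stmt_0_general μ n X hmeas hrange hindep x hx
end

section
/- For arbitrary [0,1]-valued random variables X_1,...,X_n, E[max_i X_i] - max_i E[X_i] ≤ 1 - 1/n, and equality is attained by the random vector Z uniformly distributed on the n canonical unit vectors e_1,...,e_n of {0,1}^n. -/
open MeasureTheory ProbabilityTheory

/-! If the `X i` take values in `[0, 1]`, then pointwise `max_i X i` is at most `1` and at most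
`∑ i, X i`, hence at most the convex combination `(1 - 1/n) + (1/n) ∑ i, X i`. Taking
expectations, `E[max_i X i] ≤ (1 - 1/n) + (1/n) ∑ i, E[X i] ≤ (1 - 1/n) + max_i E[X i]`.
For `Z = e_ω` with `ω` uniform on the `n` coordinates, each `E[Z i]` is `1/n` while
`max_i Z i ≡ 1`, so the bound is attained. -/

lemma integrable_of_forall_mem_Icc {Ω : Type*} [MeasurableSpace Ω] {μ : Measure Ω}
    [IsFiniteMeasure μ] {f : Ω → ℝ} (hf : AEStronglyMeasurable f μ)
    (h : ∀ ω, f ω ∈ Set.Icc (0 : ℝ) 1) : Integrable f μ :=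
  .of_bound hf 1 <| .of_forall fun ω => by
    rw [Real.norm_eq_abs, abs_le]
    exact ⟨by linarith [(h ω).1], (h ω).2⟩

section Bound

variable {ι : Type*} [Fintype ι] [Nonempty ι]

lemma card_mul_iSup_le_card_sub_one_add_sum {x : ι → ℝ} (h0 : ∀ i, 0 ≤ x i)
    (h1 : ∀ i, x i ≤ 1) :
    Fintype.card ι * ⨆ i, x i ≤ (Fintype.card ι - 1) + ∑ i, x i := by
  have hle_one : ⨆ i, x i ≤ 1 := ciSup_le h1
  have hle_sum : ⨆ i, x i ≤ ∑ i, x i :=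
    ciSup_le fun i => Finset.single_le_sum (fun j _ => h0 j) (Finset.mem_univ i)
  have hcard : (1 : ℝ) ≤ Fintype.card ι := by exact_mod_cast Fintype.card_pos
  nlinarith

lemma iSup_mem_Icc_of_forall_mem_Icc {x : ι → ℝ} (hx : ∀ i, x i ∈ Set.Icc (0 : ℝ) 1) :
    ⨆ i, x i ∈ Set.Icc (0 : ℝ) 1 := by
  obtain ⟨i⟩ := ‹Nonempty ι›
  exact ⟨(hx i).1.trans (le_ciSup (Set.finite_range x).bddAbove i), ciSup_le fun i => (hx i).2⟩

variable {Ω : Type*} [MeasurableSpace Ω] {μ : Measure Ω} [IsProbabilityMeasure μ]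

lemma card_mul_integral_iSup_le {X : ι → Ω → ℝ} (hX : ∀ i, Measurable (X i))
    (hX01 : ∀ i ω, X i ω ∈ Set.Icc (0 : ℝ) 1) :
    Fintype.card ι * ∫ ω, ⨆ i, X i ω ∂μ ≤ (Fintype.card ι - 1) + ∑ i, ∫ ω, X i ω ∂μ := by
  have hint i : Integrable (X i) μ :=
    integrable_of_forall_mem_Icc (hX i).aestronglyMeasurable (hX01 i)
  have hsum : Integrable (fun ω => ∑ i, X i ω) μ := integrable_finsetSum _ fun i _ => hint i
  have hsup : Integrable (fun ω => ⨆ i, X i ω) μ :=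
    integrable_of_forall_mem_Icc (Measurable.iSup hX).aestronglyMeasurable
      fun ω => iSup_mem_Icc_of_forall_mem_Icc (hX01 · ω)
  calc Fintype.card ι * ∫ ω, ⨆ i, X i ω ∂μ
      = ∫ ω, Fintype.card ι * ⨆ i, X i ω ∂μ := (integral_const_mul _ _).symm
    _ ≤ ∫ ω, ((Fintype.card ι - 1) + ∑ i, X i ω) ∂μ :=
        integral_mono (hsup.const_mul _) ((integrable_const _).add hsum) fun ω =>
          card_mul_iSup_le_card_sub_one_add_sum (fun i => (hX01 i ω).1) (fun i => (hX01 i ω).2)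
    _ = (Fintype.card ι - 1) + ∑ i, ∫ ω, X i ω ∂μ := by
        rw [integral_add (integrable_const _) hsum, integral_const,
          integral_finsetSum _ fun i _ => hint i]
        simp

theorem integral_iSup_sub_le {X : ι → Ω → ℝ} (hX : ∀ i, Measurable (X i))
    (hX01 : ∀ i ω, X i ω ∈ Set.Icc (0 : ℝ) 1) {m : ℝ} (hm : ∀ i, ∫ ω, X i ω ∂μ ≤ m) :
    (∫ ω, ⨆ i, X i ω ∂μ) - m ≤ 1 - 1 / Fintype.card ι := by
  have hcard : (0 : ℝ) < Fintype.card ι := by exact_mod_cast Fintype.card_pos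
  have hsum : ∑ i, ∫ ω, X i ω ∂μ ≤ Fintype.card ι * m := by
    simpa using Finset.sum_le_sum fun i (_ : i ∈ Finset.univ) => hm i
  have := card_mul_integral_iSup_le (μ := μ) hX hX01
  rw [one_sub_div hcard.ne', le_div_iff₀ hcard]
  linarith

end Bound

section Extremal

variable {ι : Type*}

lemma uniformOn_univ_singleton [Fintype ι] [MeasurableSpace ι] [MeasurableSingletonClass ι]
    (i : ι) : uniformOn (Set.univ : Set ι) {i} = 1 / Fintype.card ι := by
  rw [uniformOn_univ, Measure.count_singleton]

variable [DecidableEq ι]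

lemma pi_single_one_apply_eq_one_iff {ω i : ι} : (Pi.single ω 1 : ι → ℝ) i = 1 ↔ i = ω := by
  by_cases h : i = ω <;> simp [h]

lemma iSup_pi_single_one_apply [Finite ι] (ω : ι) : ⨆ i, (Pi.single ω 1 : ι → ℝ) i = 1 := by
  have : Nonempty ι := ⟨ω⟩
  refine le_antisymm (ciSup_le fun i => ?_) ?_
  · by_cases h : i = ω <;> simp [h]
  · simpa using le_ciSup (Set.finite_range (Pi.single ω 1 : ι → ℝ)).bddAbove ω

lemma integral_pi_single_one_apply_uniformOn_univ [Fintype ι] [Nonempty ι] [MeasurableSpace ι]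
    [MeasurableSingletonClass ι] (i : ι) :
    ∫ ω, (Pi.single ω 1 : ι → ℝ) i ∂uniformOn Set.univ = 1 / Fintype.card ι := by
  simp_rw [Pi.single_comm _ _ i, ← Pi.one_apply (M := fun _ : ι => ℝ) i,
    ← Set.indicator_singleton]
  rw [integral_indicator_one (measurableSet_singleton i), measureReal_def,
    uniformOn_univ_singleton, ENNReal.toReal_div]
  simp

end Extremal

theorem stmt_3 (n : ℕ) (hn : 0 < n) :
    (∀ (Ω : Type) (_ : MeasurableSpace Ω) (μ : Measure Ω), IsProbabilityMeasure μ →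
      ∀ (X : Fin n → Ω → ℝ), (∀ i, Measurable (X i)) →
        (∀ i ω, X i ω ∈ Set.Icc (0 : ℝ) 1) →
        ∀ x : ℝ, IsGreatest {e : ℝ | ∃ i, e = ∫ ω, X i ω ∂μ} x →
          (∫ ω, (⨆ i, X i ω) ∂μ) - x ≤ 1 - 1 / n) ∧
    (∃ (Ω : Type) (_ : MeasurableSpace Ω) (μ : Measure Ω) (_ : IsProbabilityMeasure μ)
        (Z : Fin n → Ω → ℝ),
      (∀ i, Measurable (Z i)) ∧
      (∀ i ω, Z i ω = 0 ∨ Z i ω = 1) ∧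
      (∀ ω, ∃! i, Z i ω = 1) ∧
      (∀ i, μ {ω | Z i ω = 1} = 1 / n) ∧
      (∀ i, ∫ ω, Z i ω ∂μ = 1 / n) ∧
      (∫ ω, (⨆ i, Z i ω) ∂μ) - 1 / n = 1 - 1 / n) := by
  have : NeZero n := ⟨hn.ne'⟩
  refine ⟨fun Ω _ μ _ X hX hX01 x hx => ?_, ?_⟩
  · simpa using integral_iSup_sub_le hX hX01 fun i => hx.2 ⟨i, rfl⟩
  refine ⟨Fin n, inferInstance, uniformOn Set.univ, inferInstance,
    fun i ω => (Pi.single ω 1 : Fin n → ℝ) i, fun i => .of_discrete,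
    fun i ω => ?_, fun ω => ⟨ω, by simp, fun i => pi_single_one_apply_eq_one_iff.1⟩,
    fun i => ?_, fun i => ?_, ?_⟩
  · by_cases h : i = ω <;> simp [h]
  · simpa [pi_single_one_apply_eq_one_iff] using uniformOn_univ_singleton i
  · simpa using integral_pi_single_one_apply_uniformOn_univ i
  · simp [iSup_pi_single_one_apply]
end

section
/- With R_I = {(x,y) : 0 ≤ x ≤ y ≤ 2x - x^2} ⊂ [0,1]^2, one has area(R_I) = 1/6, ∫_{R_I} (y-x) d(x,y) = 1/60 (so the mean difference under uniform measure on R_I is 1/10), and ∫_{R_I} (y/x) d(x,y) = 5/24 (so the mean ratio is 5/4). -/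
/-!
`R_I` is the region between the graphs of `x` and `2x - x²` over `[0, 1]` (for `x > 1` the
section is empty). By Fubini all three quantities are iterated integrals of polynomials: the
area is `∫₀¹ (x - x²) = 1/6`, the inner integral of `y - x` is `(x - x²)² / 2`, and the inner
integral of `y / x` is `x (1 - x) (3 - x) / 2`, which has no singularity at `x = 0`.
-/

open MeasureTheory Set

section RegionBetweenCC

variable {α : Type*} [MeasurableSpace α] {μ : Measure α} {f g : α → ℝ} {s : Set α}

theorem volume_region_between_cc_eq_lintegral (hf : Measurable f) (hg : Measurable g)
    (hs : MeasurableSet s) :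
    μ.prod volume {p : α × ℝ | p.1 ∈ s ∧ p.2 ∈ Icc (f p.1) (g p.1)} =
      ∫⁻ x in s, ENNReal.ofReal (g x - f x) ∂μ := by
  rw [Measure.prod_apply (measurableSet_region_between_cc hf hg hs),
    ← lintegral_indicator hs]
  congr 1 with x
  by_cases hx : x ∈ s
  · rw [indicator_of_mem hx, ← Real.volume_Icc]
    congr 1 with y
    simp [hx]
  · simp [hx]

theorem volume_region_between_cc_eq_integral (hf : Measurable f) (hg : Measurable g)
    (hs : MeasurableSet s) (f_int : IntegrableOn f s μ) (g_int : IntegrableOn g s μ)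
    (hfg : ∀ x ∈ s, f x ≤ g x) :
    μ.prod volume {p : α × ℝ | p.1 ∈ s ∧ p.2 ∈ Icc (f p.1) (g p.1)} =
      ENNReal.ofReal (∫ x in s, (g x - f x) ∂μ) := by
  rw [volume_region_between_cc_eq_lintegral hf hg hs,
    ofReal_integral_eq_lintegral_ofReal (f := fun x => g x - f x) (g_int.sub f_int)]
  exact ae_restrict_of_forall_mem hs fun x hx => sub_nonneg.2 (hfg x hx)

theorem setIntegral_region_between_cc [SFinite μ] {E : Type*} [NormedAddCommGroup E]
    [NormedSpace ℝ E] {F : α × ℝ → E} (hf : Measurable f) (hg : Measurable g)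
    (hs : MeasurableSet s)
    (hF : IntegrableOn F {p : α × ℝ | p.1 ∈ s ∧ p.2 ∈ Icc (f p.1) (g p.1)} (μ.prod volume)) :
    ∫ p in {p : α × ℝ | p.1 ∈ s ∧ p.2 ∈ Icc (f p.1) (g p.1)}, F p ∂(μ.prod volume) =
      ∫ x in s, (∫ y in Icc (f x) (g x), F (x, y)) ∂μ := by
  have hR := measurableSet_region_between_cc hf hg hs
  rw [← integral_indicator hR, integral_prod _ (hF.integrable_indicator hR),
    ← integral_indicator hs]
  congr 1 with x
  by_cases hx : x ∈ s
  · rw [indicator_of_mem hx, ← integral_indicator measurableSet_Icc]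
    congr 1 with y
    simp [indicator, hx]
  · simp [indicator, hx]

end RegionBetweenCC

def prophetRegion : Set (ℝ × ℝ) := {p | 0 ≤ p.1 ∧ p.1 ≤ p.2 ∧ p.2 ≤ 2 * p.1 - p.1 ^ 2}

theorem prophetRegion_eq :
    prophetRegion = {p | p.1 ∈ Icc 0 1 ∧ p.2 ∈ Icc p.1 (2 * p.1 - p.1 ^ 2)} := by
  ext ⟨x, y⟩
  simp only [prophetRegion, mem_ofPred_eq, mem_Icc]
  constructor
  · rintro ⟨hx, hxy, hy⟩
    exact ⟨⟨hx, by nlinarith⟩, hxy, hy⟩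
  · rintro ⟨⟨hx, -⟩, hxy, hy⟩
    exact ⟨hx, hxy, hy⟩

theorem volume_prophetRegion : volume prophetRegion = ENNReal.ofReal (1 / 6) := by
  rw [prophetRegion_eq, Measure.volume_eq_prod,
    volume_region_between_cc_eq_integral (f := fun x => x) (g := fun x => 2 * x - x ^ 2)
      measurable_id (by fun_prop) measurableSet_Icc
      continuous_id.integrableOn_Icc (by fun_prop : Continuous _).integrableOn_Icc
      (fun x hx => by nlinarith [hx.1, hx.2]),
    integral_Icc_eq_integral_Ioc, ← intervalIntegral.integral_of_le zero_le_one]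
  simp (disch := apply Continuous.intervalIntegrable; fun_prop)
    [intervalIntegral.integral_sub, intervalIntegral.integral_const_mul (f := fun x => x),
      integral_pow]
  norm_num

theorem measurableSet_prophetRegion : MeasurableSet prophetRegion := by
  rw [prophetRegion_eq]
  exact measurableSet_region_between_cc (f := fun x => x) (g := fun x => 2 * x - x ^ 2)
    measurable_id (by fun_prop) measurableSet_Icc

theorem integrableOn_prophetRegion_of_norm_le {F : ℝ × ℝ → ℝ} (hF : Measurable F) (C : ℝ)
    (hC : ∀ p ∈ prophetRegion, ‖F p‖ ≤ C) : IntegrableOn F prophetRegion :=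
  Measure.integrableOn_of_bounded (volume_prophetRegion ▸ ENNReal.ofReal_ne_top)
    hF.aestronglyMeasurable (ae_restrict_of_forall_mem measurableSet_prophetRegion hC)

theorem integral_prophetRegion {F : ℝ × ℝ → ℝ} (hF : IntegrableOn F prophetRegion) :
    ∫ p in prophetRegion, F p = ∫ x in (0 : ℝ)..1, ∫ y in x..2 * x - x ^ 2, F (x, y) := by
  rw [prophetRegion_eq, Measure.volume_eq_prod] at hF ⊢
  rw [setIntegral_region_between_cc (f := fun x => x) (g := fun x => 2 * x - x ^ 2)
      measurable_id (by fun_prop) measurableSet_Icc hF,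
    integral_Icc_eq_integral_Ioc, ← intervalIntegral.integral_of_le zero_le_one]
  refine intervalIntegral.integral_congr fun x hx => ?_
  rw [uIcc_of_le zero_le_one] at hx
  rw [integral_Icc_eq_integral_Ioc, intervalIntegral.integral_of_le (by nlinarith [hx.1, hx.2])]

theorem integral_prophetRegion_sub : ∫ p in prophetRegion, (p.2 - p.1) = 1 / 60 := by
  have inner (x : ℝ) : ∫ y in x..2 * x - x ^ 2, (y - x) = x ^ 2 / 2 - x ^ 3 + x ^ 4 / 2 := by
    rw [intervalIntegral.integral_sub intervalIntegral.intervalIntegrable_id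
      intervalIntegrable_const, integral_id, intervalIntegral.integral_const, smul_eq_mul]
    ring
  have hF : IntegrableOn (fun p : ℝ × ℝ => p.2 - p.1) prophetRegion :=
    integrableOn_prophetRegion_of_norm_le (by fun_prop) 1 fun p ⟨hx, hxy, hy⟩ => by
      rw [Real.norm_eq_abs, abs_le]
      constructor <;> nlinarith
  rw [integral_prophetRegion hF]
  simp_rw [inner]
  simp (disch := apply Continuous.intervalIntegrable; fun_prop)
    [intervalIntegral.integral_add, intervalIntegral.integral_sub, intervalIntegral.integral_div,
      integral_pow]
  norm_num

theorem integral_prophetRegion_div : ∫ p in prophetRegion, p.2 / p.1 = 5 / 24 := by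
  have inner (x : ℝ) : ∫ y in x..2 * x - x ^ 2, y / x = (3 * x - 4 * x ^ 2 + x ^ 3) / 2 := by
    rw [intervalIntegral.integral_div, integral_id]
    rcases eq_or_ne x 0 with rfl | hx
    · simp
    · field_simp
      ring
  have hF : IntegrableOn (fun p : ℝ × ℝ => p.2 / p.1) prophetRegion :=
    integrableOn_prophetRegion_of_norm_le (by fun_prop) 2 fun p ⟨hx, hxy, hy⟩ => by
      rw [Real.norm_eq_abs, abs_of_nonneg (div_nonneg (hx.trans hxy) hx)]
      exact div_le_of_le_mul₀ hx zero_le_two (by nlinarith)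
  rw [integral_prophetRegion hF]
  simp_rw [inner]
  simp (disch := apply Continuous.intervalIntegrable; fun_prop)
    [intervalIntegral.integral_add, intervalIntegral.integral_sub, intervalIntegral.integral_div,
      intervalIntegral.integral_const_mul (f := fun x => x), integral_pow]
  norm_num

theorem stmt_13 :
    let R : Set (ℝ × ℝ) := {p | 0 ≤ p.1 ∧ p.1 ≤ p.2 ∧ p.2 ≤ 2 * p.1 - p.1 ^ 2}
    volume R = ENNReal.ofReal (1 / 6) ∧
    (∫ p in R, (p.2 - p.1) ∂volume) = 1 / 60 ∧
    (∫ p in R, (p.2 - p.1) ∂volume) / (volume R).toReal = 1 / 10 ∧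
    (∫ p in R, p.2 / p.1 ∂volume) = 5 / 24 ∧
    (∫ p in R, p.2 / p.1 ∂volume) / (volume R).toReal = 5 / 4 := by
  intro R
  rw [show R = prophetRegion from rfl, volume_prophetRegion, integral_prophetRegion_sub,
    integral_prophetRegion_div, ENNReal.toReal_ofReal (by norm_num)]
  norm_num
end

section
/- Under the uniform distribution on R_I = {(x,y) : 0 ≤ x ≤ y ≤ 2x - x^2}, for every c ∈ [1,2] the probability that y/x ≥ c equals (2-c)^3. -/
open MeasureTheory Set

/-!
For `c ≥ 1` the event `{c x ≤ y}` cuts `R` down to the parabolic segment between the chord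
`y = c x` and the parabola `y = 2x - x²`. Its vertical slice over `x ∈ [0, 2 - c]` is an interval
of length `(2 - c) x - x²`, so by Fubini its area is `∫₀^{2-c} ((2 - c) x - x²) dx = (2 - c)³ / 6`.
Since `R` itself is the case `c = 1`, of area `1 / 6`, the ratio is `(2 - c)³`.
-/

theorem volume_regionBetween_Icc_eq_lintegral {α : Type*} [MeasurableSpace α] (μ : Measure α)
    {f g : α → ℝ} {s : Set α} (hf : Measurable f) (hg : Measurable g) (hs : MeasurableSet s) :
    μ.prod volume {p : α × ℝ | p.1 ∈ s ∧ p.2 ∈ Icc (f p.1) (g p.1)} =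
      ∫⁻ x in s, ENNReal.ofReal (g x - f x) ∂μ := by
  rw [Measure.prod_apply (measurableSet_region_between_cc hf hg hs),
    ← lintegral_indicator hs]
  congr 1 with x
  by_cases hx : x ∈ s
  · simp only [preimage, mem_ofPred_eq, hx, true_and, indicator_of_mem]
    exact Real.volume_Icc
  · simp [hx]

theorem integral_mul_id_sub_sq (k : ℝ) : ∫ x in (0 : ℝ)..k, (k * x - x ^ 2) = k ^ 3 / 6 := by
  rw [intervalIntegral.integral_sub, intervalIntegral.integral_const_mul, integral_id,
    integral_pow]
  · ring
  all_goals exact Continuous.intervalIntegrable (by fun_prop) _ _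

def parabolicSegment (a b : ℝ) : Set (ℝ × ℝ) :=
  {p | 0 ≤ p.1 ∧ a * p.1 ≤ p.2 ∧ p.2 ≤ b * p.1 - p.1 ^ 2}

theorem parabolicSegment_eq {a b : ℝ} (hab : a ≤ b) :
    parabolicSegment a b =
      {p | p.1 ∈ Icc 0 (b - a) ∧ p.2 ∈ Icc (a * p.1) (b * p.1 - p.1 ^ 2)} := by
  ext ⟨x, y⟩
  simp only [parabolicSegment, mem_ofPred_eq, mem_Icc]
  constructor
  · rintro ⟨hx, hxy, hyx⟩
    exact ⟨⟨hx, by nlinarith [mul_le_mul_of_nonneg_left hab hx]⟩, hxy, hyx⟩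
  · rintro ⟨⟨hx, -⟩, hxy, hyx⟩
    exact ⟨hx, hxy, hyx⟩

theorem volume_parabolicSegment {a b : ℝ} (hab : a ≤ b) :
    volume (parabolicSegment a b) = ENNReal.ofReal ((b - a) ^ 3 / 6) := by
  have hnonneg : ∀ x ∈ Icc 0 (b - a), 0 ≤ (b - a) * x - x ^ 2 := fun x hx => by
    nlinarith [hx.1, hx.2]
  rw [parabolicSegment_eq hab, Measure.volume_eq_prod,
    volume_regionBetween_Icc_eq_lintegral (f := fun x => a * x) (g := fun x => b * x - x ^ 2) _
      (by fun_prop) (by fun_prop) measurableSet_Icc,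
    ← integral_mul_id_sub_sq, intervalIntegral.integral_of_le (sub_nonneg.2 hab),
    ← integral_Icc_eq_integral_Ioc, ofReal_integral_eq_lintegral_ofReal]
  · refine setLIntegral_congr_fun measurableSet_Icc fun x _ => ?_
    ring_nf
  · exact Continuous.integrableOn_Icc (by fun_prop)
  · exact (ae_restrict_iff' measurableSet_Icc).2 (Filter.Eventually.of_forall hnonneg)

theorem stmt_14 (c : ℝ) (hc : c ∈ Set.Icc (1 : ℝ) 2) :
    let R : Set (ℝ × ℝ) := {p | 0 ≤ p.1 ∧ p.1 ≤ p.2 ∧ p.2 ≤ 2 * p.1 - p.1 ^ 2}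
    volume (R ∩ {p : ℝ × ℝ | c * p.1 ≤ p.2}) / volume R = ENNReal.ofReal ((2 - c) ^ 3) := by
  intro R
  have hR : R = parabolicSegment 1 2 := by
    simp only [R, parabolicSegment, one_mul]
  have hRc : R ∩ {p : ℝ × ℝ | c * p.1 ≤ p.2} = parabolicSegment c 2 := by
    ext ⟨x, y⟩
    simp only [R, parabolicSegment, mem_inter_iff, mem_ofPred_eq]
    constructor
    · rintro ⟨⟨hx, -, hyx⟩, hxy⟩
      exact ⟨hx, hxy, hyx⟩
    · rintro ⟨hx, hxy, hyx⟩
      exact ⟨⟨hx, by nlinarith [hc.1], hyx⟩, hxy⟩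
  rw [hRc, hR, volume_parabolicSegment hc.2, volume_parabolicSegment one_le_two,
    ← ENNReal.ofReal_div_of_pos (by norm_num)]
  congr 1
  ring
end
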